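/- arXiv:1907.08430 — 10 statements merged into one kernel-verified Lean document; each statement's English description precedes it below -/
import Mathlib

section
/- Let G be a d-regular finite simple graph of order n, and let k be a positive integer with k ≤ 2d. Then the k-rainbow domination number of G satisfies γ_rk(G) ≥ ⌈kn/(2d)⌉. -/
open SimpleGraph Finset

/-- `f` is a `k`-rainbow dominating function on `G`: every vertex with empty color set
has, for each color, a neighbour carrying that color. -/
def IsKRDF {V : Type*} (G : SimpleGraph V) (k : ℕ) (f : V → Finset (Fin k)) : Prop :=
  ∀ v : V, f v = ∅ → ∀ i : Fin k, ∃ u : V, G.Adj v u ∧ i ∈ f u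

/-- The weight of a rainbow coloring function. -/
def rdfWeight {V : Type*} [Fintype V] {k : ℕ} (f : V → Finset (Fin k)) : ℕ :=
  ∑ v : V, (f v).card

/-- The `k`-rainbow domination number of `G`: the minimum weight of a `k`-RDF. -/
noncomputable def rainbowDomNum {V : Type*} [Fintype V] (G : SimpleGraph V) (k : ℕ) : ℕ :=
  sInf {w : ℕ | ∃ f : V → Finset (Fin k), IsKRDF G k f ∧ rdfWeight f = w}

lemma key_ineq {V : Type*} [Fintype V] (G : SimpleGraph V) [DecidableRel G.Adj]
    (d k : ℕ) (hreg : G.IsRegularOfDegree d) (hk : 0 < k) (hk2 : k ≤ 2 * d)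
    (f : V → Finset (Fin k)) (hf : IsKRDF G k f) :
    (k : ℤ) * (Fintype.card V : ℤ) ≤ 2 * d * (rdfWeight f : ℤ) := by
  classical
  set t : V → ℤ := fun v => ((f v).card : ℤ) with ht
  set F : V → V → ℤ := fun v u => if f v = ∅ ∧ ¬ (f u = ∅) then 2*d*t u - k else 0 with hF
  have hdpos : 0 < d := by omega
  -- swap lemma
  have h1 : ∀ (H : V → V → ℤ), ∑ v : V, ∑ u ∈ G.neighborFinset v, H v u
      = ∑ v : V, ∑ u : V, if G.Adj v u then H v u else 0 := by
    intro H
    refine Finset.sum_congr rfl fun v _ => ?_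
    rw [SimpleGraph.neighborFinset_eq_filter, Finset.sum_filter]
  have hswap : ∑ v : V, ∑ u ∈ G.neighborFinset v, F v u
      = ∑ v : V, ∑ u ∈ G.neighborFinset v, F u v := by
    rw [h1, h1, Finset.sum_comm]
    refine Finset.sum_congr rfl fun v _ => Finset.sum_congr rfl fun u _ => ?_
    exact if_congr (G.adj_comm u v) rfl rfl
  have hstep : ∀ v : V, (d : ℤ) * k ≤
      (∑ u ∈ G.neighborFinset v, F v u) - (∑ u ∈ G.neighborFinset v, F u v)
        + 2*d*d*t v := by
    intro v
    have hcard : (G.neighborFinset v).card = d := hreg v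
    by_cases hv : f v = ∅
    · have htv : t v = 0 := by simp [ht, hv]
      have h0 : ∑ u ∈ G.neighborFinset v, F u v = 0 := by
        apply Finset.sum_eq_zero; intro u _
        simp [hF, hv]
      have hsum : (k : ℤ) ≤ ∑ u ∈ G.neighborFinset v, t u := by
        have hsub : (Finset.univ : Finset (Fin k)) ⊆ (G.neighborFinset v).biUnion f := by
          intro i _
          obtain ⟨u, hadj, hiu⟩ := hf v hv i
          exact Finset.mem_biUnion.2 ⟨u, (G.mem_neighborFinset v u).2 hadj, hiu⟩
        have hk1 : k ≤ ∑ u ∈ G.neighborFinset v, (f u).card := by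
          calc k = (Finset.univ : Finset (Fin k)).card := by simp
            _ ≤ ((G.neighborFinset v).biUnion f).card := Finset.card_le_card hsub
            _ ≤ ∑ u ∈ G.neighborFinset v, (f u).card := Finset.card_biUnion_le
        simp only [ht]
        exact_mod_cast hk1
      have hge : ∀ u ∈ G.neighborFinset v, 2*(d:ℤ)*t u - k ≤ F v u := by
        intro u _
        by_cases hu : f u = ∅
        · have : t u = 0 := by simp [ht, hu]
          simp only [hF, hu, not_true_eq_false, and_false, if_false, this]
          have : (0:ℤ) ≤ k := Int.natCast_nonneg k
          linarith
        · simp [hF, hv, hu]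
      have h2 : ∑ u ∈ G.neighborFinset v, (2*(d:ℤ)*t u - k)
          = 2*d*(∑ u ∈ G.neighborFinset v, t u) - k*d := by
        rw [Finset.sum_sub_distrib, Finset.sum_const, hcard, ← Finset.mul_sum]
        ring
      have h3 : ∑ u ∈ G.neighborFinset v, (2*(d:ℤ)*t u - k)
          ≤ ∑ u ∈ G.neighborFinset v, F v u := Finset.sum_le_sum hge
      rw [h0, htv]
      have hd : (0:ℤ) ≤ d := Int.natCast_nonneg d
      nlinarith [hsum, h2, h3]
    · have hFv : ∀ u ∈ G.neighborFinset v, F v u = 0 := by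
        intro u _; simp [hF, hv]
      have h0 : ∑ u ∈ G.neighborFinset v, F v u = 0 := Finset.sum_eq_zero hFv
      have htv1 : (1:ℤ) ≤ t v := by
        have : 0 < (f v).card := Finset.card_pos.2 (Finset.nonempty_iff_ne_empty.2 hv)
        simp only [ht]; exact_mod_cast this
      have hnn : (0:ℤ) ≤ 2*d*t v - k := by
        have : (k:ℤ) ≤ 2*d := by exact_mod_cast hk2
        nlinarith [Int.natCast_nonneg d]
      have hle : ∀ u ∈ G.neighborFinset v, F u v ≤ 2*(d:ℤ)*t v - k := by
        intro u _
        by_cases hu : f u = ∅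
        · simp [hF, hu, hv]
        · simp only [hF, hu, false_and, if_false]; exact hnn
      have h3 : ∑ u ∈ G.neighborFinset v, F u v
          ≤ ∑ u ∈ G.neighborFinset v, (2*(d:ℤ)*t v - k) := Finset.sum_le_sum hle
      rw [Finset.sum_const, hcard] at h3
      rw [h0]
      rw [nsmul_eq_mul] at h3
      nlinarith [h3]
  have htot : (d:ℤ) * k * (Fintype.card V : ℤ)
      ≤ ∑ v : V, ((∑ u ∈ G.neighborFinset v, F v u)
          - (∑ u ∈ G.neighborFinset v, F u v) + 2*d*d*t v) := by
    calc (d:ℤ) * k * (Fintype.card V : ℤ) = ∑ _v : V, (d:ℤ)*k := by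
          rw [Finset.sum_const, Finset.card_univ, nsmul_eq_mul]; ring
      _ ≤ _ := Finset.sum_le_sum fun v _ => hstep v
  have hsum_split : ∑ v : V, ((∑ u ∈ G.neighborFinset v, F v u)
      - (∑ u ∈ G.neighborFinset v, F u v) + 2*d*d*t v)
      = 2*d*d*(rdfWeight f : ℤ) := by
    rw [Finset.sum_add_distrib, Finset.sum_sub_distrib, hswap, sub_self, zero_add,
      ← Finset.mul_sum]
    congr 1
    simp [ht, rdfWeight]
  rw [hsum_split] at htot
  have hd : (0:ℤ) < d := by exact_mod_cast hdpos
  nlinarith [htot]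

/-- For a `d`-regular graph of order `n` and `0 < k ≤ 2d`,
`γ_rk(G) ≥ ⌈kn/(2d)⌉`. -/
theorem stmt_0 {V : Type*} [Fintype V] (G : SimpleGraph V) [DecidableRel G.Adj]
    (d k : ℕ) (hreg : G.IsRegularOfDegree d) (hk : 0 < k) (hk2 : k ≤ 2 * d) :
    (⌈((k : ℚ) * (Fintype.card V : ℚ)) / (2 * (d : ℚ))⌉ : ℤ) ≤ (rainbowDomNum G k : ℤ) := by
  classical
  have hdpos : 0 < d := by omega
  -- the defining set is nonempty
  have hne : {w : ℕ | ∃ f : V → Finset (Fin k), IsKRDF G k f ∧ rdfWeight f = w}.Nonempty := by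
    refine ⟨rdfWeight (fun _ : V => (Finset.univ : Finset (Fin k))), fun _ => Finset.univ, ?_, rfl⟩
    intro v hv
    exfalso
    have hne' : Nonempty (Fin k) := ⟨⟨0, hk⟩⟩
    exact Finset.univ_nonempty.ne_empty hv
  obtain ⟨f, hf, hw⟩ := Nat.sInf_mem hne
  have hkey := key_ineq G d k hreg hk hk2 f hf
  rw [hw] at hkey
  rw [Int.ceil_le]
  have h2d : (0:ℚ) < 2 * d := by positivity
  rw [div_le_iff₀ h2d]
  push_cast
  have : (k:ℚ) * (Fintype.card V : ℚ) ≤ 2 * d * (rainbowDomNum G k : ℚ) := by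
    exact_mod_cast hkey
  linarith
end

section
/- Let G be a d-regular finite simple graph of order n, and let k be a positive integer with k ≥ 2d. Then the k-rainbow domination number of G satisfies γ_rk(G) = n. -/
open SimpleGraph Finset

theorem rdf_lower {V : Type*} [Fintype V] (G : SimpleGraph V) [DecidableRel G.Adj]
    (d k : ℕ) (hreg : G.IsRegularOfDegree d) (hk : 0 < k) (hk2 : 2 * d ≤ k)
    (f : V → Finset (Fin k)) (hf : IsKRDF G k f) :
    Fintype.card V ≤ rdfWeight f := by
  classical
  set V0 : Finset V := univ.filter (fun v => f v = ∅) with hV0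
  -- step A: colour sums at empty vertices
  have stepA : ∀ v ∈ V0, k ≤ ∑ u ∈ G.neighborFinset v, (f u).card := by
    intro v hv
    have hv' : f v = ∅ := by simpa [hV0] using hv
    have hsub : (univ : Finset (Fin k)) ⊆ (G.neighborFinset v).biUnion f := by
      intro i _
      obtain ⟨u, hadj, hiu⟩ := hf v hv' i
      exact Finset.mem_biUnion.2 ⟨u, by simpa [SimpleGraph.mem_neighborFinset] using hadj, hiu⟩
    calc k = (univ : Finset (Fin k)).card := by simp
    _ ≤ ((G.neighborFinset v).biUnion f).card := Finset.card_le_card hsub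
    _ ≤ ∑ u ∈ G.neighborFinset v, (f u).card := Finset.card_biUnion_le
  by_cases hV0e : V0 = ∅
  · -- every vertex has a nonempty set
    have : ∀ u : V, 1 ≤ (f u).card := by
      intro u
      have : f u ≠ ∅ := by
        intro h
        have : u ∈ V0 := by simp [hV0, h]
        simp [hV0e] at this
      exact Finset.card_pos.2 (Finset.nonempty_iff_ne_empty.2 this)
    calc Fintype.card V = ∑ _u : V, 1 := by simp
    _ ≤ ∑ u : V, (f u).card := Finset.sum_le_sum (fun u _ => this u)
  · -- V0 nonempty; first d > 0
    obtain ⟨v0, hv0⟩ := Finset.nonempty_iff_ne_empty.2 hV0e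
    have hd : 0 < d := by
      have hv0' : f v0 = ∅ := by simpa [hV0] using hv0
      obtain ⟨u, hadj, _⟩ := hf v0 hv0' ⟨0, hk⟩
      have : 0 < G.degree v0 := by
        rw [← SimpleGraph.card_neighborFinset_eq_degree]
        exact Finset.card_pos.2 ⟨u, by simpa [SimpleGraph.mem_neighborFinset] using hadj⟩
      simpa [hreg v0] using this
    set g : V → ℕ := fun u => (f u).card - 1 with hg
    -- claim1
    have claim1 : ∀ v ∈ V0, d ≤ ∑ u ∈ G.neighborFinset v, g u := by
      intro v hv
      have h1 : ∑ u ∈ G.neighborFinset v, (f u).card ≤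
          (∑ u ∈ G.neighborFinset v, g u) + d := by
        have := hreg v
        calc ∑ u ∈ G.neighborFinset v, (f u).card
            ≤ ∑ u ∈ G.neighborFinset v, (g u + 1) :=
              Finset.sum_le_sum (fun u _ => by simp [hg]; omega)
          _ = (∑ u ∈ G.neighborFinset v, g u) + G.degree v := by
              rw [Finset.sum_add_distrib]; simp [SimpleGraph.card_neighborFinset_eq_degree]
          _ = _ := by rw [hreg v]
      have := stepA v hv
      omega
    -- claim2: double counting
    have claim2 : ∑ v ∈ V0, ∑ u ∈ G.neighborFinset v, g u ≤ d * ∑ u : V, g u := by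
      have hre : ∀ v : V, G.neighborFinset v = univ.filter (fun u => G.Adj v u) := by
        intro v; ext u; simp [SimpleGraph.mem_neighborFinset]
      calc ∑ v ∈ V0, ∑ u ∈ G.neighborFinset v, g u
          = ∑ v ∈ V0, ∑ u : V, if G.Adj v u then g u else 0 := by
            refine Finset.sum_congr rfl (fun v _ => ?_)
            rw [hre v, Finset.sum_filter]
        _ = ∑ u : V, ∑ v ∈ V0, if G.Adj v u then g u else 0 := Finset.sum_comm
        _ = ∑ u : V, (V0.filter (fun v => G.Adj v u)).card * g u := by
            refine Finset.sum_congr rfl (fun u _ => ?_)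
            rw [← Finset.sum_filter, Finset.sum_const, smul_eq_mul]
        _ ≤ ∑ u : V, d * g u := by
            refine Finset.sum_le_sum (fun u _ => ?_)
            refine Nat.mul_le_mul_right _ ?_
            have hsub : V0.filter (fun v => G.Adj v u) ⊆ G.neighborFinset u := by
              intro v hv
              simp only [Finset.mem_filter] at hv
              exact (SimpleGraph.mem_neighborFinset _ _ _).2 hv.2.symm
            calc (V0.filter (fun v => G.Adj v u)).card ≤ (G.neighborFinset u).card :=
                Finset.card_le_card hsub
              _ = d := by rw [SimpleGraph.card_neighborFinset_eq_degree, hreg u]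
        _ = d * ∑ u : V, g u := by rw [Finset.mul_sum]
    have claim3 : V0.card ≤ ∑ u : V, g u := by
      have h1 : d * V0.card ≤ ∑ v ∈ V0, ∑ u ∈ G.neighborFinset v, g u := by
        calc d * V0.card = ∑ _v ∈ V0, d := by rw [Finset.sum_const, smul_eq_mul, mul_comm]
        _ ≤ _ := Finset.sum_le_sum claim1
      exact Nat.le_of_mul_le_mul_left (h1.trans claim2) hd
    -- final
    have hsplit : rdfWeight f = (∑ u : V, g u) + (univ.filter (fun u => ¬ f u = ∅)).card := by
      rw [rdfWeight]
      have : ∀ u : V, (f u).card = g u + (if f u = ∅ then 0 else 1) := by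
        intro u
        by_cases h : f u = ∅ <;> simp [hg, h]
        · have : 1 ≤ (f u).card := Finset.card_pos.2 (Finset.nonempty_iff_ne_empty.2 h)
          omega
      rw [Finset.sum_congr rfl (fun u _ => this u), Finset.sum_add_distrib]
      congr 1
      rw [Finset.sum_ite, Finset.sum_const, Finset.sum_const]
      simp
    have hcards : V0.card + (univ.filter (fun u => ¬ f u = ∅)).card = Fintype.card V := by
      rw [hV0, Finset.card_filter_add_card_filter_not]
      simp
    omega

/-- For a `d`-regular graph of order `n` and `k ≥ 2d`, `k > 0`,
`γ_rk(G) = n`. -/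
theorem stmt_1 {V : Type*} [Fintype V] (G : SimpleGraph V) [DecidableRel G.Adj]
    (d k : ℕ) (hreg : G.IsRegularOfDegree d) (hk : 0 < k) (hk2 : 2 * d ≤ k) :
    rainbowDomNum G k = Fintype.card V := by
  classical
  set S : Set ℕ := {w : ℕ | ∃ f : V → Finset (Fin k), IsKRDF G k f ∧ rdfWeight f = w} with hS
  have hmem : Fintype.card V ∈ S := by
    refine ⟨fun _ => {⟨0, hk⟩}, fun v hv => absurd hv (by simp), by simp [rdfWeight]⟩
  have hlow : ∀ w ∈ S, Fintype.card V ≤ w := by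
    rintro w ⟨f, hf, rfl⟩
    exact rdf_lower G d k hreg hk hk2 f hf
  refine le_antisymm (Nat.sInf_le hmem) (hlow _ (Nat.sInf_mem ⟨_, hmem⟩))
end

section
/- Let G be a d-regular finite simple graph of order n with d ≥ 1, let k be a positive integer and let f be a k-rainbow dominating function on G with weight w(f). With c the number of colored vertices and e₂ the number of edges with both endpoints colored, the inequality w(f) ≥ ((n − c)·k + 2e₂)/d holds (equivalently, d·w(f) ≥ (n − c)·k + 2e₂). -/
open SimpleGraph Finset

/-- Number of colored vertices (`c`). -/
noncomputable def coloredCount {V : Type*} {k : ℕ} (f : V → Finset (Fin k)) : ℕ :=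
  {v : V | f v ≠ ∅}.ncard

/-- Number of non-colored vertices (`c₀`). -/
noncomputable def uncoloredCount {V : Type*} {k : ℕ} (f : V → Finset (Fin k)) : ℕ :=
  {v : V | f v = ∅}.ncard

/-- Number of edges with both endpoints non-colored (`e₀`). -/
noncomputable def e0Count {V : Type*} (G : SimpleGraph V) {k : ℕ}
    (f : V → Finset (Fin k)) : ℕ :=
  {e ∈ G.edgeSet | ∀ v ∈ e, f v = ∅}.ncard

/-- Number of edges with exactly one colored endpoint (`e₁`). -/
noncomputable def e1Count {V : Type*} (G : SimpleGraph V) {k : ℕ}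
    (f : V → Finset (Fin k)) : ℕ :=
  {e ∈ G.edgeSet | (∃ v ∈ e, f v = ∅) ∧ ∃ v ∈ e, f v ≠ ∅}.ncard

/-- Number of edges with both endpoints colored (`e₂`). -/
noncomputable def e2Count {V : Type*} (G : SimpleGraph V) {k : ℕ}
    (f : V → Finset (Fin k)) : ℕ :=
  {e ∈ G.edgeSet | ∀ v ∈ e, f v ≠ ∅}.ncard

/-!
Sum, over all vertices `v`, the total number of colors on the neighbourhood of `v`. By
`d`-regularity every vertex is counted `d` times, so the sum is `d · w(f)`. An uncolored vertex
sees all `k` colors in its neighbourhood, and a colored vertex sees at least one color on each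
colored neighbour; summing the latter over the colored vertices counts every edge with both
endpoints colored twice.
-/

namespace SimpleGraph

variable {V : Type*} [Fintype V] {G : SimpleGraph V} [DecidableRel G.Adj]

theorem IsRegularOfDegree.sum_sum_neighborFinset {M : Type*} [AddCommMonoid M] {d : ℕ}
    (hreg : G.IsRegularOfDegree d) (g : V → M) :
    ∑ v, ∑ u ∈ G.neighborFinset v, g u = d • ∑ u, g u := by
  rw [sum_comm' (t' := univ) (s' := fun u ↦ G.neighborFinset u) (by simp [adj_comm]),
    smul_sum]
  exact sum_congr rfl fun u _ ↦ by rw [sum_const, card_neighborFinset_eq_degree, hreg.degree_eq]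

variable (G) in
theorem two_mul_ncard_edges_within (s : Set V) [DecidablePred (· ∈ s)] :
    2 * {e ∈ G.edgeSet | ∀ v ∈ e, v ∈ s}.ncard
      = ∑ v with v ∈ s, #{u ∈ G.neighborFinset v | u ∈ s} := by
  classical
  have hedges : {e ∈ G.edgeSet | ∀ v ∈ e, v ∈ s} = (G.induce s).spanningCoe.edgeSet := by
    ext e; induction e using Sym2.ind; simp
  have hdegree (v : V) : (G.induce s).spanningCoe.degree v
      = if v ∈ s then #{u ∈ G.neighborFinset v | u ∈ s} else 0 := by
    split_ifs with hv
    · rw [← card_neighborFinset_eq_degree]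
      congr 1; ext u; simp [hv]
    · rw [← card_neighborFinset_eq_degree, card_eq_zero]
      ext u; simp [hv]
  rw [hedges, ← coe_edgeFinset, Set.ncard_coe_finset, ← sum_degrees_eq_twice_card_edges,
    sum_filter]
  exact sum_congr rfl fun v _ ↦ hdegree v

end SimpleGraph

theorem Finset.card_filter_ne_empty_le_sum_card {ι α : Type*} (t : Finset ι) (f : ι → Finset α)
    [DecidablePred fun u ↦ f u ≠ ∅] :
    #{u ∈ t | f u ≠ ∅} ≤ ∑ u ∈ t, (f u).card := by
  rw [card_filter]
  exact sum_le_sum fun u _ ↦ by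
    split_ifs with hu
    exacts [card_pos.2 (nonempty_iff_ne_empty.2 hu), Nat.zero_le _]

section RainbowDomination

variable {V : Type*} [Fintype V] {G : SimpleGraph V} [DecidableRel G.Adj] {k : ℕ}
  {f : V → Finset (Fin k)}

theorem IsKRDF.le_sum_card_neighborFinset (hf : IsKRDF G k f) {v : V} (hv : f v = ∅) :
    k ≤ ∑ u ∈ G.neighborFinset v, (f u).card := by
  classical
  have hcover : (univ : Finset (Fin k)) ⊆ (G.neighborFinset v).biUnion f := fun i _ ↦ by
    obtain ⟨u, hadj, hi⟩ := hf v hv i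
    exact mem_biUnion.2 ⟨u, (G.mem_neighborFinset v u).2 hadj, hi⟩
  calc k = #(univ : Finset (Fin k)) := (card_fin k).symm
    _ ≤ #((G.neighborFinset v).biUnion f) := card_le_card hcover
    _ ≤ ∑ u ∈ G.neighborFinset v, (f u).card := card_biUnion_le

variable (f) in
theorem uncoloredCount_add_coloredCount :
    uncoloredCount f + coloredCount f = Fintype.card V := by
  rw [uncoloredCount, coloredCount, ← Nat.card_eq_fintype_card, ← Set.ncard_add_ncard_compl]
  rfl

theorem IsKRDF.uncoloredCount_mul_add_two_mul_e2Count_le {d : ℕ} (hreg : G.IsRegularOfDegree d)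
    (hf : IsKRDF G k f) : uncoloredCount f * k + 2 * e2Count G f ≤ d * rdfWeight f := by
  classical
  have hlocal (v : V) : (if f v = ∅ then k else #{u ∈ G.neighborFinset v | f u ≠ ∅})
      ≤ ∑ u ∈ G.neighborFinset v, (f u).card := by
    split_ifs with hv
    exacts [hf.le_sum_card_neighborFinset hv, card_filter_ne_empty_le_sum_card _ f]
  have huncolored : uncoloredCount f = #{v | f v = ∅} := by
    rw [uncoloredCount, ← Set.ncard_coe_finset, coe_filter_univ]
  have hedges : 2 * e2Count G f = ∑ v with f v ≠ ∅, #{u ∈ G.neighborFinset v | f u ≠ ∅} :=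
    G.two_mul_ncard_edges_within {v | f v ≠ ∅}
  calc uncoloredCount f * k + 2 * e2Count G f
      = ∑ v, if f v = ∅ then k else #{u ∈ G.neighborFinset v | f u ≠ ∅} := by
        rw [sum_ite, sum_const, smul_eq_mul, huncolored, hedges]
    _ ≤ ∑ v, ∑ u ∈ G.neighborFinset v, (f u).card := sum_le_sum fun v _ ↦ hlocal v
    _ = d * rdfWeight f := hreg.sum_sum_neighborFinset _

end RainbowDomination

theorem stmt_4_general {V : Type*} [Fintype V] (G : SimpleGraph V) [DecidableRel G.Adj]
    (d k : ℕ) (hreg : G.IsRegularOfDegree d)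
    (f : V → Finset (Fin k)) (hf : IsKRDF G k f) :
    ((Fintype.card V : ℤ) - coloredCount f) * k + 2 * e2Count G f
      ≤ (d : ℤ) * rdfWeight f := by
  have hmain := hf.uncoloredCount_mul_add_two_mul_e2Count_le hreg
  have hcount := uncoloredCount_add_coloredCount f
  zify at hmain hcount
  rw [← hcount, add_sub_cancel_right]
  exact hmain

/-- For a `d`-regular graph (`d ≥ 1`) of order `n` and a `k`-RDF `f`,
`w(f) ≥ ((n − c)·k + 2e₂)/d`, i.e. `d·w(f) ≥ (n − c)·k + 2e₂`. -/
theorem stmt_4 {V : Type*} [Fintype V] (G : SimpleGraph V) [DecidableRel G.Adj]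
    (d k : ℕ) (hd : 1 ≤ d) (hreg : G.IsRegularOfDegree d) (hk : 0 < k)
    (f : V → Finset (Fin k)) (hf : IsKRDF G k f) :
    ((Fintype.card V : ℤ) - coloredCount f) * k + 2 * e2Count G f
      ≤ (d : ℤ) * rdfWeight f :=
  stmt_4_general G d k hreg f hf
end

section
/- Let G be a d-regular finite simple graph of order n with d ≥ 1, let k be a positive integer and let f be a k-rainbow dominating function on G with weight w(f). With c the number of colored vertices, the inequality w(f) ≥ ((k − d)/d)·n + ((2d − k)/d)·c holds (equivalently, d·w(f) ≥ (k − d)·n + (2d − k)·c, as an inequality of integers). -/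
open SimpleGraph Finset

/-- For a `d`-regular graph (`d ≥ 1`) of order `n` and a `k`-RDF `f`,
`w(f) ≥ ((k − d)/d)·n + ((2d − k)/d)·c`, i.e. `d·w(f) ≥ (k − d)·n + (2d − k)·c` in `ℤ`. -/
theorem stmt_6 {V : Type*} [Fintype V] (G : SimpleGraph V) [DecidableRel G.Adj]
    (d k : ℕ) (hd : 1 ≤ d) (hreg : G.IsRegularOfDegree d) (hk : 0 < k)
    (f : V → Finset (Fin k)) (hf : IsKRDF G k f) :
    ((k : ℤ) - d) * Fintype.card V + (2 * (d : ℤ) - k) * coloredCount f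
      ≤ (d : ℤ) * rdfWeight f := by
  classical
  set C : Finset V := Finset.univ.filter (fun v => f v ≠ ∅) with hC
  set U : Finset V := Finset.univ.filter (fun v => f v = ∅) with hU
  set e₁ : V → ℕ := fun u => (U.filter (fun v => G.Adj u v)).card with he₁
  have hcc : coloredCount f = C.card := by
    rw [coloredCount, Set.ncard_eq_toFinset_card', Set.toFinset_setOf]
  have hn : Fintype.card V = C.card + U.card := by
    rw [hC, hU, ← Finset.card_univ,
      ← Finset.card_filter_add_card_filter_not (p := fun v => f v ≠ ∅)]
    simp
  have hw : (rdfWeight f : ℕ) = ∑ u ∈ C, (f u).card := by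
    rw [rdfWeight, ← Finset.sum_filter_add_sum_filter_not Finset.univ (fun v => f v ≠ ∅)]
    have : ∑ v ∈ Finset.univ.filter (fun v => ¬ f v ≠ ∅), (f v).card = 0 := by
      apply Finset.sum_eq_zero
      intro v hv
      simp only [Finset.mem_filter, not_not] at hv
      simp [hv.2]
    rw [← hC] at *
    omega
  have hdeg : ∀ (v : V) (s : Finset V), (s.filter (fun u => G.Adj v u)).card ≤ d := by
    intro v s
    have hsub : s.filter (fun u => G.Adj v u) ⊆ G.neighborFinset v := by
      intro u hu
      rw [SimpleGraph.mem_neighborFinset]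
      exact (Finset.mem_filter.1 hu).2
    calc (s.filter (fun u => G.Adj v u)).card ≤ (G.neighborFinset v).card :=
          Finset.card_le_card hsub
      _ = d := hreg v
  -- swap lemma
  have hswap : ∀ (g : V → ℕ), ∑ v ∈ U, ∑ u ∈ C.filter (fun u => G.Adj v u), g u
      = ∑ u ∈ C, e₁ u * g u := by
    intro g
    have : ∀ v ∈ U, ∑ u ∈ C.filter (fun u => G.Adj v u), g u
        = ∑ u ∈ C, if G.Adj v u then g u else 0 := fun v _ => Finset.sum_filter _ _
    rw [Finset.sum_congr rfl this, Finset.sum_comm]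
    apply Finset.sum_congr rfl
    intro u _
    rw [he₁]
    have : ∀ v ∈ U, (if G.Adj v u then g u else 0) = if G.Adj u v then g u else 0 := by
      intro v _
      exact if_congr (G.adj_comm v u) rfl rfl
    rw [Finset.sum_congr rfl this, ← Finset.sum_filter, Finset.sum_const, smul_eq_mul]
  -- per-uncolored-vertex bound
  have hN1v : ∀ v ∈ U, k ≤ ∑ u ∈ C.filter (fun u => G.Adj v u), (f u).card := by
    intro v hv
    have hv' : f v = ∅ := (Finset.mem_filter.1 hv).2
    have hsub : (Finset.univ : Finset (Fin k)) ⊆ (C.filter (fun u => G.Adj v u)).biUnion f := by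
      intro i _
      obtain ⟨u, hadj, hiu⟩ := hf v hv' i
      refine Finset.mem_biUnion.2 ⟨u, Finset.mem_filter.2 ⟨Finset.mem_filter.2
        ⟨Finset.mem_univ u, fun h => by simp [h] at hiu⟩, hadj⟩, hiu⟩
    calc k = (Finset.univ : Finset (Fin k)).card := by simp
      _ ≤ ((C.filter (fun u => G.Adj v u)).biUnion f).card := Finset.card_le_card hsub
      _ ≤ ∑ u ∈ C.filter (fun u => G.Adj v u), (f u).card := Finset.card_biUnion_le
  have hN1 : k * U.card ≤ ∑ u ∈ C, e₁ u * (f u).card := by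
    rw [← hswap]
    calc k * U.card = ∑ _v ∈ U, k := by rw [Finset.sum_const, smul_eq_mul, mul_comm]
      _ ≤ _ := Finset.sum_le_sum hN1v
  have hN2 : ∑ u ∈ C, e₁ u ≤ d * U.card := by
    have := hswap (fun _ => 1)
    simp only [mul_one] at this
    rw [← this]
    calc ∑ v ∈ U, ∑ _u ∈ C.filter (fun u => G.Adj v u), 1
        = ∑ v ∈ U, (C.filter (fun u => G.Adj v u)).card := by
          simp
      _ ≤ ∑ _v ∈ U, d := Finset.sum_le_sum (fun v _ => hdeg v C)
      _ = d * U.card := by rw [Finset.sum_const, smul_eq_mul, mul_comm]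
  have he1d : ∀ u, e₁ u ≤ d := fun u => hdeg u U
  have hfpos : ∀ u ∈ C, 1 ≤ (f u).card := by
    intro u hu
    have := (Finset.mem_filter.1 hu).2
    exact Finset.card_pos.2 (Finset.nonempty_iff_ne_empty.2 this)
  -- combine in ℤ
  have key : (k : ℤ) * U.card + (d : ℤ) * C.card - (d : ℤ) * U.card
      ≤ (d : ℤ) * rdfWeight f := by
    have h1 : (k : ℤ) * U.card ≤ ∑ u ∈ C, (e₁ u : ℤ) * (f u).card := by
      have := hN1
      push_cast
      exact_mod_cast this
    have h2 : ∑ u ∈ C, (e₁ u : ℤ) ≤ (d : ℤ) * U.card := by exact_mod_cast hN2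
    have h3 : ∑ u ∈ C, ((d : ℤ) - e₁ u) ≤ ∑ u ∈ C, ((d : ℤ) - e₁ u) * (f u).card := by
      apply Finset.sum_le_sum
      intro u hu
      have h1' : (0 : ℤ) ≤ (d : ℤ) - e₁ u := by
        have := he1d u; omega
      have h2' : (1 : ℤ) ≤ (f u).card := by exact_mod_cast hfpos u hu
      nlinarith
    have hwz : (d : ℤ) * rdfWeight f = ∑ u ∈ C, (e₁ u : ℤ) * (f u).card
        + ∑ u ∈ C, ((d : ℤ) - e₁ u) * (f u).card := by
      rw [← Finset.sum_add_distrib]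
      have : ∀ u ∈ C, (e₁ u : ℤ) * (f u).card + ((d : ℤ) - e₁ u) * (f u).card
          = (d : ℤ) * (f u).card := by intro u _; ring
      rw [Finset.sum_congr rfl this, ← Finset.mul_sum]
      congr 1
      exact_mod_cast hw
    have hsum : ∑ u ∈ C, ((d : ℤ) - e₁ u) = (d : ℤ) * C.card - ∑ u ∈ C, (e₁ u : ℤ) := by
      rw [Finset.sum_sub_distrib, Finset.sum_const, nsmul_eq_mul, mul_comm]
    linarith
  rw [hcc, hn]
  push_cast
  linarith
end

section
/- Let G be a d-regular finite simple graph of order n with d ≥ 1, let k be a positive integer and let f be a k-rainbow dominating function on G with weight w(f). With c₀ the number of non-colored vertices, the inequality w(f) ≥ n − ((2d − k)/d)·c₀ holds (equivalently, d·w(f) ≥ d·n − (2d − k)·c₀, as an inequality of integers). -/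
open SimpleGraph Finset

/-- For a `d`-regular graph (`d ≥ 1`) of order `n` and a `k`-RDF `f`,
`w(f) ≥ n − ((2d − k)/d)·c₀`, i.e. `d·w(f) ≥ d·n − (2d − k)·c₀` in `ℤ`. -/
theorem stmt_7 {V : Type*} [Fintype V] (G : SimpleGraph V) [DecidableRel G.Adj]
    (d k : ℕ) (hd : 1 ≤ d) (hreg : G.IsRegularOfDegree d) (hk : 0 < k)
    (f : V → Finset (Fin k)) (hf : IsKRDF G k f) :
    (d : ℤ) * Fintype.card V - (2 * (d : ℤ) - k) * uncoloredCount f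
      ≤ (d : ℤ) * rdfWeight f := by
  classical
  set U : Finset V := Finset.univ.filter (fun v => f v = ∅) with hU
  set C : Finset V := Finset.univ.filter (fun v => ¬ f v = ∅) with hC
  have hUcount : uncoloredCount f = U.card := by
    rw [uncoloredCount, Set.ncard_eq_toFinset_card']
    congr 1
    ext v
    simp [hU]
  have hn : Fintype.card V = U.card + C.card := by
    rw [hU, hC, Finset.card_filter_add_card_filter_not, Finset.card_univ]
  set g : V → ℕ := fun u => (f u).card + (if f u = ∅ then 1 else 0) with hg
  have hg1 : ∀ u, 1 ≤ g u := by
    intro u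
    by_cases h : f u = ∅
    · simp [hg, h]
    · have : 0 < (f u).card := Finset.card_pos.mpr (Finset.nonempty_iff_ne_empty.mpr h)
      simp [hg]; omega
  have hsumg : ∑ u, g u = rdfWeight f + U.card := by
    rw [hg, Finset.sum_add_distrib, rdfWeight]
    congr 1
    rw [hU, Finset.card_filter]
  have hdouble : ∑ v, ∑ u ∈ G.neighborFinset v, g u = d * (rdfWeight f + U.card) := by
    have h1 : ∀ v : V, ∑ u ∈ G.neighborFinset v, g u
        = ∑ u, if G.Adj v u then g u else 0 := by
      intro v
      rw [SimpleGraph.neighborFinset_def]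
      rw [show (G.neighborSet v).toFinset = Finset.univ.filter (fun u => G.Adj v u) by
        ext u; simp]
      rw [Finset.sum_filter]
    calc ∑ v, ∑ u ∈ G.neighborFinset v, g u
        = ∑ v, ∑ u, if G.Adj v u then g u else 0 := by
          exact Finset.sum_congr rfl fun v _ => h1 v
      _ = ∑ u, ∑ v, if G.Adj v u then g u else 0 := Finset.sum_comm
      _ = ∑ u, ∑ v ∈ Finset.univ.filter (fun v => G.Adj v u), g u := by
          refine Finset.sum_congr rfl fun u _ => ?_
          rw [Finset.sum_filter]
      _ = ∑ u, (Finset.univ.filter (fun v => G.Adj v u)).card * g u := by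
          refine Finset.sum_congr rfl fun u _ => ?_
          rw [Finset.sum_const, smul_eq_mul]
      _ = ∑ u, d * g u := by
          refine Finset.sum_congr rfl fun u _ => ?_
          congr 1
          have : Finset.univ.filter (fun v => G.Adj v u) = G.neighborFinset u := by
            ext v; simp [SimpleGraph.adj_comm]
          rw [this]
          exact hreg u
      _ = d * ∑ u, g u := by rw [Finset.mul_sum]
      _ = d * (rdfWeight f + U.card) := by rw [hsumg]
  have hlower : k * U.card + d * C.card ≤ ∑ v, ∑ u ∈ G.neighborFinset v, g u := by
    have hpt : ∀ v : V, (if f v = ∅ then k else d) ≤ ∑ u ∈ G.neighborFinset v, g u := by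
      intro v
      by_cases hv : f v = ∅
      · simp only [hv, if_true]
        have hsub : (Finset.univ : Finset (Fin k)) ⊆ (G.neighborFinset v).biUnion f := by
          intro i _
          obtain ⟨u, hadj, hi⟩ := hf v hv i
          exact Finset.mem_biUnion.mpr ⟨u, (G.mem_neighborFinset v u).mpr hadj, hi⟩
        calc k = (Finset.univ : Finset (Fin k)).card := by simp
          _ ≤ ((G.neighborFinset v).biUnion f).card := Finset.card_le_card hsub
          _ ≤ ∑ u ∈ G.neighborFinset v, (f u).card := Finset.card_biUnion_le
          _ ≤ ∑ u ∈ G.neighborFinset v, g u :=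
              Finset.sum_le_sum fun u _ => by simp [hg]
      · simp only [hv, if_false]
        calc d = (G.neighborFinset v).card := (hreg v).symm ▸ (G.card_neighborFinset_eq_degree v).symm ▸ rfl
          _ = ∑ u ∈ G.neighborFinset v, 1 := by simp
          _ ≤ ∑ u ∈ G.neighborFinset v, g u := Finset.sum_le_sum fun u _ => hg1 u
    calc k * U.card + d * C.card = ∑ v, (if f v = ∅ then k else d) := by
          rw [Finset.sum_ite, Finset.sum_const, Finset.sum_const, smul_eq_mul, smul_eq_mul]
          rw [hU, hC]; ring
      _ ≤ ∑ v, ∑ u ∈ G.neighborFinset v, g u := Finset.sum_le_sum fun v _ => hpt v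
  have key : k * U.card + d * C.card ≤ d * (rdfWeight f + U.card) := hdouble ▸ hlower
  have keyZ : (k : ℤ) * U.card + d * C.card ≤ d * (rdfWeight f + U.card) := by
    exact_mod_cast key
  rw [hUcount, hn]
  push_cast
  nlinarith [keyZ]
end

section
/- Let G be a d-regular finite simple graph of order n, let k be an integer with 0 < k < 2d, and let f be a k-rainbow dominating function on G whose weight equals the k-rainbow domination number γ_rk(G). With c the number of colored vertices of f, the inequality c ≤ (d·γ_rk(G) + (d − k)·n)/(2d − k) holds (equivalently, (2d − k)·c ≤ d·γ_rk(G) + (d − k)·n, as an inequality of integers). -/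
open SimpleGraph Finset

/-- For a `d`-regular graph of order `n`, `0 < k < 2d`, and a `γ_rk(G)`-function
`f`, `c ≤ (d·γ_rk(G) + (d − k)·n)/(2d − k)`, i.e. `(2d − k)·c ≤ d·γ_rk(G) + (d − k)·n` in `ℤ`. -/
theorem stmt_8 {V : Type*} [Fintype V] (G : SimpleGraph V) [DecidableRel G.Adj]
    (d k : ℕ) (hreg : G.IsRegularOfDegree d) (hk : 0 < k) (hk2 : k < 2 * d)
    (f : V → Finset (Fin k)) (hf : IsKRDF G k f)
    (hmin : rdfWeight f = rainbowDomNum G k) :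
    (2 * (d : ℤ) - k) * coloredCount f
      ≤ (d : ℤ) * rainbowDomNum G k + ((d : ℤ) - k) * Fintype.card V := by
  classical
  set S₀ : Finset V := Finset.univ.filter (fun v => f v = ∅) with hS₀
  set S₁ : Finset V := Finset.univ.filter (fun v => f v ≠ ∅) with hS₁
  have hcard : S₀.card + S₁.card = Fintype.card V := by
    rw [hS₀, hS₁]
    simpa using Finset.card_filter_add_card_filter_not (s := Finset.univ)
      (p := fun v => f v = ∅)
  have hc : (coloredCount f : ℤ) = S₁.card := by
    unfold coloredCount
    rw [Set.ncard_eq_toFinset_card']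
    congr 2
    ext v
    simp [hS₁]
  -- t u = |f u| - 1 if colored, 0 if uncolored
  set t : V → ℤ := fun u => ((f u).card : ℤ) - (if f u = ∅ then 0 else 1) with ht
  have ht0 : ∀ u, 0 ≤ t u := by
    intro u
    by_cases h : f u = ∅
    · simp [ht, h]
    · have : 1 ≤ (f u).card := Finset.card_pos.mpr (Finset.nonempty_iff_ne_empty.mpr h)
      simp only [ht, if_neg h]
      have : (1 : ℤ) ≤ (f u).card := by exact_mod_cast this
      linarith
  have ht1 : ∀ u, ((f u).card : ℤ) - 1 ≤ t u := by
    intro u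
    by_cases h : f u = ∅ <;> simp [ht, h]
  -- Step 1: for uncolored v, neighbors' cards sum to at least k
  have hcover : ∀ v ∈ S₀, (k : ℤ) ≤ ∑ u ∈ G.neighborFinset v, ((f u).card : ℤ) := by
    intro v hv
    have hv' : f v = ∅ := (Finset.mem_filter.mp hv).2
    have hsub : (Finset.univ : Finset (Fin k)) ⊆ (G.neighborFinset v).biUnion f := by
      intro i _
      obtain ⟨u, hadj, hiu⟩ := hf v hv' i
      exact Finset.mem_biUnion.mpr ⟨u, (G.mem_neighborFinset v u).mpr hadj, hiu⟩
    have h1 : k ≤ ((G.neighborFinset v).biUnion f).card := by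
      simpa using Finset.card_le_card hsub
    have h2 : ((G.neighborFinset v).biUnion f).card ≤ ∑ u ∈ G.neighborFinset v, (f u).card :=
      Finset.card_biUnion_le
    exact_mod_cast h1.trans h2
  -- Step 2: for uncolored v, sum of t over neighbors is at least k - d
  have hstep2 : ∀ v ∈ S₀, (k : ℤ) - d ≤ ∑ u ∈ G.neighborFinset v, t u := by
    intro v hv
    have hdeg : (G.neighborFinset v).card = d := hreg v
    have h1 : ∑ u ∈ G.neighborFinset v, (((f u).card : ℤ) - 1)
        ≤ ∑ u ∈ G.neighborFinset v, t u := Finset.sum_le_sum fun u _ => ht1 u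
    have h2 : ∑ u ∈ G.neighborFinset v, (((f u).card : ℤ) - 1)
        = (∑ u ∈ G.neighborFinset v, ((f u).card : ℤ)) - d := by
      rw [Finset.sum_sub_distrib, Finset.sum_const, hdeg]
      push_cast
      ring
    have := hcover v hv
    linarith
  -- Step 3: swap sums and bound
  have hNF : ∀ v : V, G.neighborFinset v = Finset.univ.filter (fun u => G.Adj v u) := by
    intro v; ext u; simp
  have hswap : ∑ v ∈ S₀, ∑ u ∈ G.neighborFinset v, t u
      = ∑ u : V, ∑ v ∈ S₀, (if G.Adj v u then t u else 0) := by
    rw [Finset.sum_comm]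
    apply Finset.sum_congr rfl
    intro v _
    rw [hNF v, Finset.sum_filter]
  have hinner : ∀ u : V, ∑ v ∈ S₀, (if G.Adj v u then t u else 0) ≤ (d : ℤ) * t u := by
    intro u
    have heq : ∑ v ∈ S₀, (if G.Adj v u then t u else 0)
        = ((S₀.filter (fun v => G.Adj v u)).card : ℤ) * t u := by
      rw [← Finset.sum_filter, Finset.sum_const, nsmul_eq_mul]
    rw [heq]
    have hsub : S₀.filter (fun v => G.Adj v u) ⊆ G.neighborFinset u := by
      intro v hv
      have := (Finset.mem_filter.mp hv).2
      exact (G.mem_neighborFinset u v).mpr this.symm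
    have hle : (S₀.filter (fun v => G.Adj v u)).card ≤ d := by
      have := Finset.card_le_card hsub
      have hdeg : (G.neighborFinset u).card = d := hreg u
      omega
    have : ((S₀.filter (fun v => G.Adj v u)).card : ℤ) ≤ d := by exact_mod_cast hle
    exact mul_le_mul_of_nonneg_right this (ht0 u)
  -- Step 4: total t sum equals w - c
  have hsumT : ∑ u : V, t u = (rdfWeight f : ℤ) - S₁.card := by
    rw [ht]
    rw [Finset.sum_sub_distrib]
    have h1 : ∑ u : V, ((f u).card : ℤ) = (rdfWeight f : ℤ) := by
      unfold rdfWeight; push_cast; rfl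
    have h2 : ∑ u : V, (if f u = ∅ then (0:ℤ) else 1) = (S₁.card : ℤ) := by
      have : ∀ u : V, (if f u = ∅ then (0:ℤ) else 1) = (if f u ≠ ∅ then 1 else 0) := by
        intro u; by_cases h : f u = ∅ <;> simp [h]
      rw [Finset.sum_congr rfl (fun u _ => this u), Finset.sum_boole, hS₁]
    rw [h1, h2]
  -- Combine
  have hmain : ((k : ℤ) - d) * S₀.card ≤ (d : ℤ) * ((rdfWeight f : ℤ) - S₁.card) := by
    have h1 : ((k : ℤ) - d) * S₀.card ≤ ∑ v ∈ S₀, ∑ u ∈ G.neighborFinset v, t u := by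
      calc ((k : ℤ) - d) * S₀.card = ∑ _v ∈ S₀, ((k : ℤ) - d) := by
            rw [Finset.sum_const, nsmul_eq_mul]; ring
        _ ≤ _ := Finset.sum_le_sum hstep2
    have h2 : ∑ v ∈ S₀, ∑ u ∈ G.neighborFinset v, t u ≤ (d : ℤ) * ∑ u : V, t u := by
      rw [hswap, Finset.mul_sum]
      exact Finset.sum_le_sum fun u _ => hinner u
    rw [← hsumT]
    exact h1.trans h2
  have hn : (Fintype.card V : ℤ) = (S₀.card : ℤ) + S₁.card := by exact_mod_cast hcard.symm
  have hγ : (rainbowDomNum G k : ℤ) = (rdfWeight f : ℤ) := by exact_mod_cast hmin.symm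
  rw [hc, hn, hγ]
  nlinarith [hmain]
end

section
/- Let G be a d-regular finite simple graph of order n, let k be an integer with 0 < k < 2d, and let f be a k-rainbow dominating function on G whose weight equals the k-rainbow domination number γ_rk(G). With c₀ the number of non-colored vertices of f, the inequality c₀ ≥ d·(n − γ_rk(G))/(2d − k) holds (equivalently, (2d − k)·c₀ ≥ d·(n − γ_rk(G)), as an inequality of integers). -/
open SimpleGraph Finset

/-- For a `d`-regular graph of order `n`, `0 < k < 2d`, and a `γ_rk(G)`-function
`f`, `c₀ ≥ d·(n − γ_rk(G))/(2d − k)`, i.e. `(2d − k)·c₀ ≥ d·(n − γ_rk(G))` in `ℤ`. -/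
theorem stmt_9 {V : Type*} [Fintype V] (G : SimpleGraph V) [DecidableRel G.Adj]
    (d k : ℕ) (hreg : G.IsRegularOfDegree d) (hk : 0 < k) (hk2 : k < 2 * d)
    (f : V → Finset (Fin k)) (hf : IsKRDF G k f)
    (hmin : rdfWeight f = rainbowDomNum G k) :
    (d : ℤ) * ((Fintype.card V : ℤ) - rainbowDomNum G k)
      ≤ (2 * (d : ℤ) - k) * uncoloredCount f := by
  classical
  rw [← hmin]
  set U : Finset V := Finset.univ.filter (fun v => f v = ∅) with hU
  set C : Finset V := Finset.univ.filter (fun v => ¬ f v = ∅) with hC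
  have hc0 : (uncoloredCount f : ℤ) = (U.card : ℤ) := by
    simp [uncoloredCount, Set.ncard_eq_toFinset_card', Set.toFinset_setOf, hU]
  have hn : Fintype.card V = U.card + C.card := by
    rw [hU, hC, Finset.card_filter_add_card_filter_not]
    exact (Finset.card_univ).symm
  set g : V → ℤ := fun u => ((f u).card : ℤ) - (if f u = ∅ then 0 else 1) with hg
  have hg0 : ∀ u, 0 ≤ g u := by
    intro u
    by_cases h : f u = ∅
    · simp [hg, h]
    · have h1 : 1 ≤ (f u).card := Finset.card_pos.mpr (Finset.nonempty_iff_ne_empty.mpr h)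
      simp only [hg, h, if_false]
      have : (1 : ℤ) ≤ ((f u).card : ℤ) := by exact_mod_cast h1
      linarith
  -- per-uncolored-vertex bound
  have hA : ∀ v ∈ U, (k : ℤ) - d ≤ ∑ u ∈ G.neighborFinset v, g u := by
    intro v hv
    rw [hU, Finset.mem_filter] at hv
    have hcov : (Finset.univ : Finset (Fin k)) ⊆ (G.neighborFinset v).biUnion f := by
      intro i _
      obtain ⟨u, hadj, hiu⟩ := hf v hv.2 i
      exact Finset.mem_biUnion.mpr ⟨u, (G.mem_neighborFinset v u).mpr hadj, hiu⟩
    have hk' : k ≤ ∑ u ∈ G.neighborFinset v, (f u).card := by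
      calc k = (Finset.univ : Finset (Fin k)).card := by simp
        _ ≤ ((G.neighborFinset v).biUnion f).card := Finset.card_le_card hcov
        _ ≤ ∑ u ∈ G.neighborFinset v, (f u).card := Finset.card_biUnion_le
    have hd' : ∑ u ∈ G.neighborFinset v, (if f u = ∅ then (0:ℤ) else 1) ≤ d := by
      calc ∑ u ∈ G.neighborFinset v, (if f u = ∅ then (0:ℤ) else 1)
          ≤ ∑ u ∈ G.neighborFinset v, 1 :=
            Finset.sum_le_sum (by intro u _; split <;> norm_num)
        _ = ((G.neighborFinset v).card : ℤ) := by simp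
        _ = d := by rw [G.card_neighborFinset_eq_degree, hreg v]
    have hkc : (k:ℤ) ≤ ∑ u ∈ G.neighborFinset v, ((f u).card : ℤ) := by exact_mod_cast hk'
    simp only [hg, Finset.sum_sub_distrib]
    linarith
  have hsum1 : ((k : ℤ) - d) * U.card ≤ ∑ v ∈ U, ∑ u ∈ G.neighborFinset v, g u := by
    calc ((k : ℤ) - d) * U.card = ∑ _v ∈ U, ((k:ℤ) - d) := by
          rw [Finset.sum_const, nsmul_eq_mul]; ring
      _ ≤ ∑ v ∈ U, ∑ u ∈ G.neighborFinset v, g u := Finset.sum_le_sum hA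
  -- swap the double sum
  have hswap : ∑ v ∈ U, ∑ u ∈ G.neighborFinset v, g u
      = ∑ u : V, ((U.filter (fun v => G.Adj v u)).card : ℤ) * g u := by
    have h1 : ∀ v : V, ∑ u ∈ G.neighborFinset v, g u
        = ∑ u : V, (if G.Adj v u then g u else 0) := by
      intro v
      rw [SimpleGraph.neighborFinset_eq_filter, Finset.sum_filter]
    calc ∑ v ∈ U, ∑ u ∈ G.neighborFinset v, g u
        = ∑ v ∈ U, ∑ u : V, (if G.Adj v u then g u else 0) := by
          exact Finset.sum_congr rfl fun v _ => h1 v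
      _ = ∑ u : V, ∑ v ∈ U, (if G.Adj v u then g u else 0) := Finset.sum_comm
      _ = ∑ u : V, ((U.filter (fun v => G.Adj v u)).card : ℤ) * g u := by
          refine Finset.sum_congr rfl fun u _ => ?_
          rw [← Finset.sum_filter, Finset.sum_const, nsmul_eq_mul]
  -- bound each coefficient by d
  have hcoef : ∀ u : V, (U.filter (fun v => G.Adj v u)).card ≤ d := by
    intro u
    have hsub : U.filter (fun v => G.Adj v u) ⊆ G.neighborFinset u := by
      intro v hv
      rw [Finset.mem_filter] at hv
      exact (G.mem_neighborFinset u v).mpr hv.2.symm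
    calc (U.filter (fun v => G.Adj v u)).card ≤ (G.neighborFinset u).card :=
          Finset.card_le_card hsub
      _ = d := by rw [G.card_neighborFinset_eq_degree, hreg u]
  have hsum2 : ∑ u : V, ((U.filter (fun v => G.Adj v u)).card : ℤ) * g u
      ≤ (d : ℤ) * ∑ u : V, g u := by
    rw [Finset.mul_sum]
    refine Finset.sum_le_sum fun u _ => ?_
    have h1 : ((U.filter (fun v => G.Adj v u)).card : ℤ) ≤ (d : ℤ) := by
      exact_mod_cast hcoef u
    exact mul_le_mul_of_nonneg_right h1 (hg0 u)
  -- compute ∑ g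
  have hgsum : ∑ u : V, g u = (rdfWeight f : ℤ) - (C.card : ℤ) := by
    have hCcard : ∑ u : V, (if f u = ∅ then (0:ℤ) else 1) = (C.card : ℤ) := by
      rw [hC]
      rw [Finset.sum_ite, Finset.sum_const, Finset.sum_const]
      simp
    simp only [hg, Finset.sum_sub_distrib, hCcard]
    congr 1
    rw [rdfWeight]
    push_cast
    rfl
  have hmain : ((k : ℤ) - d) * U.card ≤ (d : ℤ) * ((rdfWeight f : ℤ) - C.card) := by
    calc ((k : ℤ) - d) * U.card ≤ ∑ v ∈ U, ∑ u ∈ G.neighborFinset v, g u := hsum1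
      _ = ∑ u : V, ((U.filter (fun v => G.Adj v u)).card : ℤ) * g u := hswap
      _ ≤ (d : ℤ) * ∑ u : V, g u := hsum2
      _ = (d : ℤ) * ((rdfWeight f : ℤ) - C.card) := by rw [hgsum]
  rw [hc0]
  have hn' : (Fintype.card V : ℤ) = (U.card : ℤ) + (C.card : ℤ) := by exact_mod_cast hn
  rw [hn']
  nlinarith [hmain]
end

section
/- Let d be a positive integer and let k be an integer with d ≤ k ≤ 2d. The k-rainbow domination number of the complete bipartite graph K_{d,d} equals k, that is, γ_rk(K_{d,d}) = k = k·n/(2d) where n = 2d is the order of K_{d,d}. -/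
open SimpleGraph Finset

/-
Lower bound: if some vertex is empty, its neighbours together carry all `k` colours, so the
weight is at least `k`; otherwise every vertex carries a colour and the weight is at least
`|V| ≥ k`. Upper bound on `K_{a,b}`: split the `k` colours among the `a` vertices of one side so
that none of them is empty, and leave the other side empty; each vertex there sees the whole
first side.
-/

section RainbowDomination

variable {V : Type*} {G : SimpleGraph V} {k : ℕ}

theorem rainbowDomNum_le [Fintype V] {f : V → Finset (Fin k)} (hf : IsKRDF G k f) :
    rainbowDomNum G k ≤ rdfWeight f :=
  Nat.sInf_le ⟨f, hf, rfl⟩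

theorem isKRDF_const_univ : IsKRDF G k fun _ => univ :=
  fun _ hv i => (notMem_empty i (hv ▸ mem_univ i)).elim

theorem le_rdfWeight_of_isKRDF [Fintype V] (hk : k ≤ Fintype.card V) {f : V → Finset (Fin k)}
    (hf : IsKRDF G k f) : k ≤ rdfWeight f := by
  classical
  by_cases hempty : ∃ v, f v = ∅
  · obtain ⟨v, hv⟩ := hempty
    have hcover : (univ : Finset (Fin k)) ⊆ (G.neighborFinset v).biUnion f := fun i _ => by
      obtain ⟨u, hadj, hi⟩ := hf v hv i
      exact mem_biUnion.mpr ⟨u, (G.mem_neighborFinset v u).mpr hadj, hi⟩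
    calc k = #(univ : Finset (Fin k)) := (card_fin k).symm
      _ ≤ #((G.neighborFinset v).biUnion f) := card_le_card hcover
      _ ≤ ∑ u ∈ G.neighborFinset v, #(f u) := card_biUnion_le
      _ ≤ rdfWeight f := sum_le_sum_of_subset (subset_univ _)
  · push Not at hempty
    calc k ≤ ∑ _u : V, 1 := by simpa using hk
      _ ≤ rdfWeight f := sum_le_sum fun u _ => card_pos.mpr (hempty u)

theorem le_rainbowDomNum [Fintype V] (hk : k ≤ Fintype.card V) : k ≤ rainbowDomNum G k :=
  le_csInf
    ⟨_, _, isKRDF_const_univ, rfl⟩ fun _ ⟨_, hf, hw⟩ => hw ▸ le_rdfWeight_of_isKRDF hk hf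

end RainbowDomination

section CompleteBipartite

variable {α β : Type*} [DecidableEq α] {k : ℕ}

def fiberColoring (g : Fin k → α) : α ⊕ β → Finset (Fin k) :=
  Sum.elim (fun a => ({i | g i = a} : Finset (Fin k))) fun _ => ∅

theorem isKRDF_fiberColoring {g : Fin k → α} (hg : Function.Surjective g) :
    IsKRDF (completeBipartiteGraph α β) k (fiberColoring g) := by
  rintro (a | b) hv i
  · obtain ⟨i, rfl⟩ := hg a
    simpa [fiberColoring] using (eq_empty_iff_forall_notMem.mp hv i)
  · exact ⟨Sum.inl (g i), by simp, by simp [fiberColoring]⟩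

theorem rdfWeight_fiberColoring [Fintype α] [Fintype β] (g : Fin k → α) :
    rdfWeight (fiberColoring (β := β) g) = k := by
  simp only [rdfWeight, Fintype.sum_sum_type, fiberColoring, Sum.elim_inl, Sum.elim_inr,
    card_empty, sum_const_zero, add_zero]
  simpa using (card_eq_sum_card_fiberwise (s := univ) (t := univ) fun i _ => mem_univ (g i)).symm

theorem rainbowDomNum_completeBipartiteGraph_le [Fintype α] [Fintype β] {g : Fin k → α}
    (hg : Function.Surjective g) :
    rainbowDomNum (completeBipartiteGraph α β) k ≤ k :=
  (rainbowDomNum_le (isKRDF_fiberColoring hg)).trans_eq (rdfWeight_fiberColoring g)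

end CompleteBipartite

/-- For `d ≥ 1` and `d ≤ k ≤ 2d`, the complete bipartite graph `K_{d,d}`
(of order `n = 2d`) satisfies `γ_rk(K_{d,d}) = k = k·n/(2d)`. -/
theorem stmt_11 (d k : ℕ) (hd : 0 < d) (hk1 : d ≤ k) (hk2 : k ≤ 2 * d) :
    rainbowDomNum (completeBipartiteGraph (Fin d) (Fin d)) k = k ∧
    2 * d * rainbowDomNum (completeBipartiteGraph (Fin d) (Fin d)) k
      = k * Fintype.card (Fin d ⊕ Fin d) := by
  have : Nonempty (Fin d) := ⟨⟨0, hd⟩⟩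
  have hsurj := Function.invFun_surjective (Fin.castLE_injective hk1)
  have hγ : rainbowDomNum (completeBipartiteGraph (Fin d) (Fin d)) k = k :=
    le_antisymm (rainbowDomNum_completeBipartiteGraph_le hsurj)
      (le_rainbowDomNum (by simpa [two_mul] using hk2))
  refine ⟨hγ, ?_⟩
  rw [hγ, Fintype.card_sum, Fintype.card_fin]
  ring
end

section
/- Let G be a d-regular finite simple graph of order n and let k be an integer with d ≤ k < 2d. If 2d·γ_rk(G) = k·n, then 2d·γ_{r(k+1)}(G) = (k+1)·n. -/
open SimpleGraph Finset

lemma univ_rdf {V : Type*} (G : SimpleGraph V) (k : ℕ) :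
    IsKRDF G k (fun _ => (Finset.univ : Finset (Fin k))) := by
  intro v hv i
  simp only [] at hv
  have : i ∈ (∅ : Finset (Fin k)) := hv ▸ (Finset.mem_univ i)
  simp at this

lemma rdf_set_nonempty {V : Type*} [Fintype V] (G : SimpleGraph V) (k : ℕ) :
    {w : ℕ | ∃ f : V → Finset (Fin k), IsKRDF G k f ∧ rdfWeight f = w}.Nonempty :=
  ⟨_, fun _ => (Finset.univ : Finset (Fin k)), univ_rdf G k, rfl⟩

lemma sum_nbr {V : Type*} [Fintype V] (G : SimpleGraph V) [DecidableRel G.Adj] {d : ℕ}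
    (hreg : G.IsRegularOfDegree d) (g : V → ℕ) :
    ∑ v : V, ∑ u ∈ G.neighborFinset v, g u = ∑ u : V, d * g u := by
  have hn : ∀ v : V, G.neighborFinset v = univ.filter (fun u => G.Adj v u) := by
    intro v; ext u; simp [mem_neighborFinset]
  calc ∑ v : V, ∑ u ∈ G.neighborFinset v, g u
      = ∑ v : V, ∑ u : V, if G.Adj v u then g u else 0 := by
        simp_rw [hn, Finset.sum_filter]
    _ = ∑ u : V, ∑ v : V, if G.Adj v u then g u else 0 := Finset.sum_comm
    _ = ∑ u : V, d * g u := by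
        refine Finset.sum_congr rfl fun u _ => ?_
        rw [← Finset.sum_filter]
        have h2 : univ.filter (fun v => G.Adj v u) = G.neighborFinset u := by
          ext v; simp [mem_neighborFinset, G.adj_comm]
        rw [h2, Finset.sum_const, smul_eq_mul]
        rw [show (G.neighborFinset u).card = G.degree u from rfl, hreg u]

lemma demand {V : Type*} [Fintype V] {G : SimpleGraph V} [DecidableRel G.Adj] {k : ℕ}
    {f : V → Finset (Fin k)} (hf : IsKRDF G k f) {v : V} (hv : f v = ∅) :
    k ≤ ∑ u ∈ G.neighborFinset v, (f u).card := by
  classical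
  have hsub : (Finset.univ : Finset (Fin k)) ⊆ (G.neighborFinset v).biUnion f := by
    intro i _
    obtain ⟨u, hadj, hi⟩ := hf v hv i
    exact Finset.mem_biUnion.2 ⟨u, by simpa [SimpleGraph.mem_neighborFinset] using hadj, hi⟩
  calc k = (Finset.univ : Finset (Fin k)).card := by simp
    _ ≤ ((G.neighborFinset v).biUnion f).card := Finset.card_le_card hsub
    _ ≤ _ := Finset.card_biUnion_le

lemma ineq_two {V : Type*} [Fintype V] (G : SimpleGraph V) [DecidableRel G.Adj] {d k e : ℕ}
    (hreg : G.IsRegularOfDegree d) (he : k = d + e)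
    (f : V → Finset (Fin k)) (hf : IsKRDF G k f) :
    e * (univ.filter (fun v : V => f v = ∅)).card
      + d * (univ.filter (fun v : V => ¬ f v = ∅)).card ≤ d * rdfWeight f := by
  classical
  set A := univ.filter (fun v : V => f v = ∅) with hA
  set B := univ.filter (fun v : V => ¬ f v = ∅) with hB
  have hw : rdfWeight f = (∑ u : V, ((f u).card - 1)) + B.card := by
    rw [rdfWeight]
    have hpt : ∀ u : V, (f u).card = ((f u).card - 1) + (if f u = ∅ then 0 else 1) := by
      intro u
      by_cases hu : f u = ∅
      · simp [hu]
      · have := Finset.card_pos.2 (Finset.nonempty_iff_ne_empty.2 hu)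
        simp only [if_neg hu]
        omega
    calc ∑ u : V, (f u).card
        = ∑ u : V, (((f u).card - 1) + if f u = ∅ then 0 else 1) :=
          Finset.sum_congr rfl fun u _ => hpt u
      _ = (∑ u : V, ((f u).card - 1)) + ∑ u : V, (if f u = ∅ then 0 else 1) :=
          Finset.sum_add_distrib
      _ = (∑ u : V, ((f u).card - 1)) + B.card := by
          congr 1
          rw [hB, Finset.card_filter]
          exact Finset.sum_congr rfl fun u _ => by by_cases hu : f u = ∅ <;> simp [hu]
  have per : ∀ v ∈ A, e ≤ ∑ u ∈ G.neighborFinset v, ((f u).card - 1) := by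
    intro v hv
    have h1 : k ≤ ∑ u ∈ G.neighborFinset v, (f u).card := demand hf (by simpa [hA] using hv)
    have h2 : ∑ u ∈ G.neighborFinset v, (f u).card
        ≤ (∑ u ∈ G.neighborFinset v, ((f u).card - 1)) + d := by
      calc ∑ u ∈ G.neighborFinset v, (f u).card
          ≤ ∑ u ∈ G.neighborFinset v, (((f u).card - 1) + 1) :=
            Finset.sum_le_sum fun u _ => by omega
        _ = (∑ u ∈ G.neighborFinset v, ((f u).card - 1)) + (G.neighborFinset v).card := by
            rw [Finset.sum_add_distrib, Finset.sum_const, smul_eq_mul, mul_one]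
        _ = _ + d := by rw [show (G.neighborFinset v).card = G.degree v from rfl, hreg v]
    omega
  have step : e * A.card ≤ d * (∑ u : V, ((f u).card - 1)) := by
    calc e * A.card = ∑ _v ∈ A, e := by rw [Finset.sum_const, smul_eq_mul, mul_comm]
      _ ≤ ∑ v ∈ A, ∑ u ∈ G.neighborFinset v, ((f u).card - 1) := Finset.sum_le_sum per
      _ ≤ ∑ v : V, ∑ u ∈ G.neighborFinset v, ((f u).card - 1) :=
          Finset.sum_le_sum_of_subset (Finset.subset_univ A)
      _ = ∑ u : V, d * ((f u).card - 1) := sum_nbr G hreg _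
      _ = d * (∑ u : V, ((f u).card - 1)) := by rw [Finset.mul_sum]
  calc e * A.card + d * B.card ≤ d * (∑ u : V, ((f u).card - 1)) + d * B.card :=
        Nat.add_le_add_right step _
    _ = d * rdfWeight f := by rw [hw, Nat.mul_add]

lemma lower_aux {V : Type*} [Fintype V] (G : SimpleGraph V) [DecidableRel G.Adj] {d k : ℕ}
    (hreg : G.IsRegularOfDegree d) (hk1 : d ≤ k) (hk2 : k ≤ 2 * d)
    (f : V → Finset (Fin k)) (hf : IsKRDF G k f) :
    k * Fintype.card V ≤ 2 * d * rdfWeight f := by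
  classical
  obtain ⟨e, he⟩ : ∃ e, k = d + e := ⟨k - d, by omega⟩
  have hed : e ≤ d := by omega
  set A := univ.filter (fun v : V => f v = ∅) with hA
  set B := univ.filter (fun v : V => ¬ f v = ∅) with hB
  have hab : A.card + B.card = Fintype.card V := by
    rw [hA, hB, Finset.card_filter_add_card_filter_not, Finset.card_univ]
  have ine1 : k * A.card ≤ d * rdfWeight f := by
    calc k * A.card = ∑ _v ∈ A, k := by rw [Finset.sum_const, smul_eq_mul, mul_comm]
      _ ≤ ∑ v ∈ A, ∑ u ∈ G.neighborFinset v, (f u).card := by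
          refine Finset.sum_le_sum fun v hv => demand hf ?_
          simpa [hA] using hv
      _ ≤ ∑ v : V, ∑ u ∈ G.neighborFinset v, (f u).card :=
          Finset.sum_le_sum_of_subset (Finset.subset_univ A)
      _ = ∑ u : V, d * (f u).card := sum_nbr G hreg _
      _ = d * rdfWeight f := by rw [rdfWeight, Finset.mul_sum]
  have ine2 : e * A.card + d * B.card ≤ d * rdfWeight f := ineq_two G hreg he f hf
  rw [← hab]
  rcases le_or_gt (2 * B.card) (A.card + B.card) with hc | hc
  · calc k * (A.card + B.card) ≤ k * (2 * A.card) := Nat.mul_le_mul_left _ (by omega)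
      _ = 2 * (k * A.card) := by ring
      _ ≤ 2 * (d * rdfWeight f) := Nat.mul_le_mul_left _ ine1
      _ = 2 * d * rdfWeight f := by ring
  · have hba : A.card ≤ B.card := by omega
    have key : d * A.card + e * B.card ≤ e * A.card + d * B.card := by
      obtain ⟨c, hcc⟩ : ∃ c, B.card = A.card + c := ⟨B.card - A.card, by omega⟩
      obtain ⟨g, hgg⟩ : ∃ g, d = e + g := ⟨d - e, by omega⟩
      rw [hcc, hgg]
      nlinarith [Nat.zero_le (g * c)]
    calc k * (A.card + B.card)
        = (d * A.card + e * B.card) + (e * A.card + d * B.card) := by rw [he]; ring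
      _ ≤ (e * A.card + d * B.card) + (e * A.card + d * B.card) :=
          Nat.add_le_add_right key _
      _ = 2 * (e * A.card + d * B.card) := by ring
      _ ≤ 2 * (d * rdfWeight f) := Nat.mul_le_mul_left _ ine2
      _ = 2 * d * rdfWeight f := by ring

/-- If `G` is `d`-regular of order `n` and `d ≤ k < 2d` with
`2d·γ_rk(G) = k·n`, then `2d·γ_{r(k+1)}(G) = (k+1)·n`. -/
theorem stmt_12 {V : Type*} [Fintype V] (G : SimpleGraph V) [DecidableRel G.Adj]
    (d k : ℕ) (hreg : G.IsRegularOfDegree d) (hk1 : d ≤ k) (hk2 : k < 2 * d)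
    (h : 2 * d * rainbowDomNum G k = k * Fintype.card V) :
    2 * d * rainbowDomNum G (k + 1) = (k + 1) * Fintype.card V := by
  classical
  have hd0 : 0 < d := by omega
  have hk0 : 0 < k := by omega
  obtain ⟨e, he⟩ : ∃ e, k = d + e := ⟨k - d, by omega⟩
  have hed : e < d := by omega
  -- an optimal k-RDF
  obtain ⟨f, hf, hwf⟩ :
      ∃ f : V → Finset (Fin k), IsKRDF G k f ∧ rdfWeight f = rainbowDomNum G k :=
    Nat.sInf_mem (rdf_set_nonempty G k)
  set w := rdfWeight f with hwdef
  have hww : 2 * d * w = k * Fintype.card V := by rw [hwf]; exact h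
  set A := univ.filter (fun v : V => f v = ∅) with hA
  set B := univ.filter (fun v : V => ¬ f v = ∅) with hB
  have hab : A.card + B.card = Fintype.card V := by
    rw [hA, hB, Finset.card_filter_add_card_filter_not, Finset.card_univ]
  set r : V → ℕ := fun v => ∑ u ∈ G.neighborFinset v, (f u).card with hr
  have hT : ∑ v : V, r v = d * w := by
    rw [hr]
    rw [sum_nbr G hreg, hwdef, rdfWeight, Finset.mul_sum]
  have hsplit : ∑ v : V, r v = (∑ v ∈ A, r v) + ∑ v ∈ B, r v :=
    (Finset.sum_filter_add_sum_filter_not univ _ r).symm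
  have demA : ∀ v ∈ A, k ≤ r v := fun v hv => demand hf (by simpa [hA] using hv)
  have ine1chain : k * A.card ≤ ∑ v ∈ A, r v := by
    calc k * A.card = ∑ _v ∈ A, k := by rw [Finset.sum_const, smul_eq_mul, mul_comm]
      _ ≤ ∑ v ∈ A, r v := Finset.sum_le_sum demA
  have ine1 : k * A.card ≤ d * w := by
    refine le_trans ine1chain ?_
    rw [← hT, hsplit]
    exact Nat.le_add_right _ _
  have ine2 : e * A.card + d * B.card ≤ d * w := ineq_two G hreg he f hf
  have hn2 : 2 * (d * w) = k * (A.card + B.card) := by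
    rw [hab, ← hww]; ring
  -- A.card = B.card
  have hABcard : A.card = B.card := by
    have h1 : A.card ≤ B.card := by
      have h2 : 2 * (k * A.card) ≤ k * A.card + k * B.card := by
        have := Nat.mul_le_mul_left 2 ine1
        have h3 : k * (A.card + B.card) = k * A.card + k * B.card := by ring
        linarith
      have h4 : k * A.card ≤ k * B.card := by linarith
      exact Nat.le_of_mul_le_mul_left h4 hk0
    have h5 : B.card ≤ A.card := by
      by_contra hcon
      push_neg at hcon
      have h6 : 2 * (e * A.card + d * B.card) ≤ k * (A.card + B.card) := by
        have := Nat.mul_le_mul_left 2 ine2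
        linarith
      have hbz : (A.card : ℤ) < B.card := by exact_mod_cast hcon
      have hdz : (e : ℤ) < d := by exact_mod_cast hed
      have hin : 2 * ((e : ℤ) * A.card + d * B.card) ≤ ((d : ℤ) + e) * (A.card + B.card) := by
        have h7 : k * (A.card + B.card) = (d + e) * (A.card + B.card) := by rw [he]
        rw [h7] at h6
        exact_mod_cast h6
      nlinarith [mul_pos (sub_pos.2 hdz) (sub_pos.2 hbz)]
    omega
  have hdw : d * w = k * A.card := by
    have h8 : 2 * (d * w) = 2 * (k * A.card) := by
      rw [hn2, ← hABcard]; ring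
    omega
  -- tightness
  have hSA : ∑ v ∈ A, r v = k * A.card := by
    have hup : ∑ v ∈ A, r v ≤ k * A.card := by
      rw [← hdw, ← hT, hsplit]
      exact Nat.le_add_right _ _
    omega
  have hrA : ∀ v ∈ A, r v = k := by
    have hkonst : ∑ _v ∈ A, k = ∑ v ∈ A, r v := by
      rw [hSA, Finset.sum_const, smul_eq_mul, mul_comm]
    exact fun v hv => ((Finset.sum_eq_sum_iff_of_le demA).1 hkonst v hv).symm
  have hrB : ∀ v ∈ B, r v = 0 := by
    have h0 : ∑ v ∈ B, r v = 0 := by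
      have := hT
      rw [hsplit, hSA, hdw] at this
      omega
    exact fun v hv => (Finset.sum_eq_zero_iff).1 h0 v hv
  have hBnbr : ∀ v : V, ¬ f v = ∅ → ∀ u ∈ G.neighborFinset v, f u = ∅ := by
    intro v hv u hu
    have hvB : v ∈ B := by simp [hB, hv]
    have h9 := hrB v hvB
    rw [hr] at h9
    exact Finset.card_eq_zero.1 ((Finset.sum_eq_zero_iff).1 h9 u hu)
  -- the set S of vertices carrying color 0
  set i0 : Fin k := ⟨0, hk0⟩ with hi0def
  set S := univ.filter (fun u : V => i0 ∈ f u) with hSdef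
  have hSne : ∀ u ∈ S, ¬ f u = ∅ := by
    intro u hu hemp
    have : i0 ∈ f u := by simpa [hSdef] using hu
    rw [hemp] at this
    simp at this
  -- every empty vertex has exactly one neighbour in S
  have hone : ∀ v ∈ A, (G.neighborFinset v ∩ S).card = 1 := by
    intro v hv
    have hvA : f v = ∅ := by simpa [hA] using hv
    obtain ⟨u0, hadj0, hiu0⟩ := hf v hvA i0
    have hu0 : u0 ∈ G.neighborFinset v ∩ S :=
      Finset.mem_inter.2 ⟨by simpa [SimpleGraph.mem_neighborFinset] using hadj0,
        by simp [hSdef, hiu0]⟩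
    have hle : (G.neighborFinset v ∩ S).card ≤ 1 := by
      rw [Finset.card_le_one]
      intro u1 h1 u2 h2
      by_contra hne
      obtain ⟨hu1N, hu1S⟩ := Finset.mem_inter.1 h1
      obtain ⟨hu2N, hu2S⟩ := Finset.mem_inter.1 h2
      have hi1 : i0 ∈ f u1 := by simpa [hSdef] using hu1S
      have hi2 : i0 ∈ f u2 := by simpa [hSdef] using hu2S
      have hrv : ∑ u ∈ G.neighborFinset v, (f u).card = k := hrA v hv
      have hcover : (G.neighborFinset v).biUnion f = (univ : Finset (Fin k)) := by
        rw [Finset.eq_univ_iff_forall]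
        intro i
        obtain ⟨u, hadj, hi⟩ := hf v hvA i
        exact Finset.mem_biUnion.2 ⟨u, by simpa [SimpleGraph.mem_neighborFinset] using hadj, hi⟩
      set t := (G.neighborFinset v).erase u2 with ht
      have hu1t : u1 ∈ t := Finset.mem_erase.2 ⟨hne, hu1N⟩
      have hsum2 : (f u2).card + ∑ u ∈ t, (f u).card = k := by
        rw [Finset.add_sum_erase (G.neighborFinset v) (fun u => (f u).card) hu2N]
        exact hrv
      have hunion : f u2 ∪ t.biUnion f = (univ : Finset (Fin k)) := by
        rw [← hcover]
        conv_rhs => rw [← Finset.insert_erase hu2N]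
        rw [Finset.biUnion_insert]
      have hbule : (t.biUnion f).card ≤ ∑ u ∈ t, (f u).card := Finset.card_biUnion_le
      have hCU : (f u2 ∪ t.biUnion f).card = k := by
        rw [hunion]
        simp
      have hinter := Finset.card_union_add_card_inter (f u2) (t.biUnion f)
      have h0 : ((f u2) ∩ (t.biUnion f)).card = 0 := by omega
      have hmem : i0 ∈ (f u2) ∩ (t.biUnion f) :=
        Finset.mem_inter.2 ⟨hi2, Finset.mem_biUnion.2 ⟨u1, hu1t, hi1⟩⟩
      rw [Finset.card_eq_zero.1 h0] at hmem
      exact absurd hmem (Finset.notMem_empty i0)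
    have hpos : 0 < (G.neighborFinset v ∩ S).card := Finset.card_pos.2 ⟨u0, hu0⟩
    omega
  -- counting : d * |S| = |A|
  have hcount : d * S.card = A.card := by
    have hstep1 : ∑ v ∈ A, (G.neighborFinset v ∩ S).card = A.card := by
      calc ∑ v ∈ A, (G.neighborFinset v ∩ S).card = ∑ _v ∈ A, 1 :=
            Finset.sum_congr rfl hone
        _ = A.card := by simp
    have l1 : ∀ v : V, (G.neighborFinset v ∩ S) = S.filter (fun u => G.Adj v u) := by
      intro v; ext u
      simp [hSdef, SimpleGraph.mem_neighborFinset]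
      tauto
    have l2 : ∀ u : V, (G.neighborFinset u ∩ A) = A.filter (fun v => G.Adj v u) := by
      intro u; ext v
      simp [hA, SimpleGraph.mem_neighborFinset, G.adj_comm]
      tauto
    have hswap : ∑ v ∈ A, (G.neighborFinset v ∩ S).card
        = ∑ u ∈ S, (G.neighborFinset u ∩ A).card := by
      calc ∑ v ∈ A, (G.neighborFinset v ∩ S).card
          = ∑ v ∈ A, ∑ u ∈ S, (if G.Adj v u then 1 else 0) := by
            refine Finset.sum_congr rfl fun v _ => ?_
            rw [l1 v, Finset.card_filter]
        _ = ∑ u ∈ S, ∑ v ∈ A, (if G.Adj v u then 1 else 0) := Finset.sum_comm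
        _ = ∑ u ∈ S, (G.neighborFinset u ∩ A).card := by
            refine Finset.sum_congr rfl fun u _ => ?_
            rw [l2 u, Finset.card_filter]
    have hfix : ∀ u ∈ S, (G.neighborFinset u ∩ A).card = d := by
      intro u hu
      have hsubA : G.neighborFinset u ⊆ A := by
        intro x hx
        have : f x = ∅ := hBnbr u (hSne u hu) x hx
        simp [hA, this]
      rw [Finset.inter_eq_left.2 hsubA,
        show (G.neighborFinset u).card = G.degree u from rfl, hreg u]
    have : A.card = ∑ _u ∈ S, d := by
      rw [← hstep1, hswap]
      exact Finset.sum_congr rfl hfix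
    rw [this, Finset.sum_const, smul_eq_mul, mul_comm]
  -- construct the (k+1)-RDF
  set g : V → Finset (Fin (k + 1)) :=
    fun u => (f u).image Fin.castSucc ∪ (if u ∈ S then {Fin.last k} else ∅) with hgdef
  have hgRDF : IsKRDF G (k + 1) g := by
    intro v hv i
    simp only [hgdef] at hv
    rw [Finset.union_eq_empty] at hv
    have hfv : f v = ∅ := Finset.image_eq_empty.1 hv.1
    refine Fin.lastCases ?_ ?_ i
    · have hvA : v ∈ A := by simp [hA, hfv]
      have hcard := hone v hvA
      have hpos : 0 < (G.neighborFinset v ∩ S).card := by omega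
      obtain ⟨u, hu⟩ := Finset.card_pos.1 hpos
      obtain ⟨huN, huS⟩ := Finset.mem_inter.1 hu
      refine ⟨u, by simpa [SimpleGraph.mem_neighborFinset] using huN, ?_⟩
      simp only [hgdef]
      exact Finset.mem_union.2 (Or.inr (by rw [if_pos huS]; exact Finset.mem_singleton_self _))
    · intro j
      obtain ⟨u, hadj, hj⟩ := hf v hfv j
      refine ⟨u, hadj, ?_⟩
      simp only [hgdef]
      exact Finset.mem_union.2 (Or.inl (Finset.mem_image.2 ⟨j, hj, rfl⟩))
  have hgw : rdfWeight g = w + S.card := by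
    have hcardg : ∀ u : V, (g u).card = (f u).card + (if u ∈ S then 1 else 0) := by
      intro u
      simp only [hgdef]
      have hdisj : Disjoint ((f u).image Fin.castSucc)
          (if u ∈ S then ({Fin.last k} : Finset (Fin (k + 1))) else ∅) := by
        by_cases hu : u ∈ S
        · rw [if_pos hu, Finset.disjoint_singleton_right, Finset.mem_image]
          rintro ⟨j, _, hj⟩
          exact absurd hj (Fin.castSucc_lt_last j).ne
        · simp [hu]
      rw [Finset.card_union_of_disjoint hdisj,
        Finset.card_image_of_injective _ (Fin.castSucc_injective k)]
      congr 1
      by_cases hu : u ∈ S <;> simp [hu]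
    calc rdfWeight g = ∑ u : V, ((f u).card + if u ∈ S then 1 else 0) :=
          Finset.sum_congr rfl fun u _ => hcardg u
      _ = (∑ u : V, (f u).card) + ∑ u : V, (if u ∈ S then 1 else 0) :=
          Finset.sum_add_distrib
      _ = w + S.card := by
          congr 1
          rw [Finset.sum_ite_mem, Finset.univ_inter, Finset.sum_const, smul_eq_mul, mul_one]
  -- conclusion
  have hup : rainbowDomNum G (k + 1) ≤ w + S.card := by
    rw [← hgw]
    exact Nat.sInf_le ⟨g, hgRDF, rfl⟩
  have hlow : (k + 1) * Fintype.card V ≤ 2 * d * rainbowDomNum G (k + 1) := by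
    obtain ⟨f', hf', hwf'⟩ :
        ∃ f' : V → Finset (Fin (k + 1)), IsKRDF G (k + 1) f' ∧
          rdfWeight f' = rainbowDomNum G (k + 1) :=
      Nat.sInf_mem (rdf_set_nonempty G (k + 1))
    rw [← hwf']
    exact lower_aux G hreg (by omega) (by omega) f' hf'
  have h2a : 2 * A.card = Fintype.card V := by omega
  have hupper : 2 * d * rainbowDomNum G (k + 1) ≤ (k + 1) * Fintype.card V := by
    have hcomp : 2 * d * (w + S.card) = (k + 1) * Fintype.card V := by
      have e1 : 2 * d * (w + S.card) = 2 * (d * w) + 2 * (d * S.card) := by ring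
      have e2 : 2 * (d * w) = k * Fintype.card V := by rw [← hww]; ring
      have e3 : (k + 1) * Fintype.card V = k * Fintype.card V + Fintype.card V := by ring
      rw [e1, e2, e3, hcount]
      omega
    calc 2 * d * rainbowDomNum G (k + 1) ≤ 2 * d * (w + S.card) :=
          Nat.mul_le_mul_left _ hup
      _ = (k + 1) * Fintype.card V := hcomp
  exact le_antisymm hupper hlow
end

section
/- Let m ≥ 2 and let G = Ml(m) be the Möbius ladder of order n = 2m (the circulant graph on ℤ_{2m} with connection set {1, −1, m}). Then γ_r2(G) = m. -/
open SimpleGraph Finset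

/-- The Möbius ladder `Ml(m)`: the circulant graph on `ℤ_{2m}` with connection set
`{1, -1, m}`. -/
def mobiusLadder (m : ℕ) : SimpleGraph (ZMod (2 * m)) :=
  SimpleGraph.circulantGraph {1, -1, (m : ZMod (2 * m))}

/-!
Let `f` be a 2-rainbow dominating function and put `s x = |f x| + |f (x + m)|`, the weight on
the rung through `x`; then `∑ s = 2 w(f)`. If a rung is empty, each of its two ends needs both
colours from its two rim neighbours, so `s (x - 1) + s (x + 1) ≥ 4`. A discharging argument
along the rim turns this local condition into `∑ s ≥ 2m`, i.e. `w(f) ≥ m`. Conversely, one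
colour on every even vertex, suitably arranged, is a 2-rainbow dominating function of weight `m`.
-/

theorem ZMod.val_add_eq_or {n : ℕ} [NeZero n] (a b : ZMod n) :
    (a + b).val = a.val + b.val ∨ (a + b).val + n = a.val + b.val := by
  rcases lt_or_ge (a.val + b.val) n with h | h
  · exact .inl (ZMod.val_add_of_lt h)
  · exact .inr (ZMod.val_add_val_of_le h).symm

section Discharging

variable {G : Type*} [AddGroup G] [Fintype G]

theorem card_le_sum_of_four_le_of_eq_zero (d : G) (s : G → ℕ)
    (h : ∀ x, s x = 0 → 4 ≤ s (x - d) + s (x + d)) :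
    Fintype.card G ≤ ∑ x, s x := by
  -- Discharging: every `x` starts with charge `2 * s x` and sends `s x - 1` to each neighbour
  -- `x ± d` with `s = 0`; afterwards every vertex holds a charge of at least `2`.
  let z : G → ℕ := fun x => if s x = 0 then 1 else 0
  have local_charge : ∀ x, 2 + ((s x - 1) * z (x - d) + (s x - 1) * z (x + d)) ≤
      2 * s x + (z x * (s (x + d) - 1) + z x * (s (x - d) - 1)) := by
    intro x
    by_cases hx : s x = 0
    · have := h x hx
      simp only [z, hx, if_true]
      split_ifs <;> omega
    · simp only [z, hx, if_false]
      split_ifs <;> omega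
  have sent_left : ∑ x, (s x - 1) * z (x - d) = ∑ x, z x * (s (x + d) - 1) := by
    rw [← Equiv.sum_comp (Equiv.addRight d)]
    simp [mul_comm]
  have sent_right : ∑ x, (s x - 1) * z (x + d) = ∑ x, z x * (s (x - d) - 1) := by
    rw [← Equiv.sum_comp (Equiv.subRight d)]
    simp [mul_comm]
  have total := sum_le_sum fun x (_ : x ∈ univ) => local_charge x
  simp only [sum_add_distrib, sum_const, card_univ, smul_eq_mul, ← mul_sum, sent_left,
    sent_right] at total
  omega

theorem two_mul_sum_eq_of_add_eq (d : G) (s : G → ℕ) {c : ℕ} (h : ∀ x, s x + s (x + d) = c) :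
    2 * ∑ x, s x = Fintype.card G * c := by
  have shift : ∑ x, s (x + d) = ∑ x, s x := Equiv.sum_comp (Equiv.addRight d) s
  calc 2 * ∑ x, s x = ∑ x, (s x + s (x + d)) := by rw [sum_add_distrib, shift]; ring
    _ = Fintype.card G * c := by simp [h]

end Discharging

theorem IsKRDF.univ_subset_biUnion {V : Type*} [DecidableEq V] {G : SimpleGraph V} {k : ℕ}
    {f : V → Finset (Fin k)} (hf : IsKRDF G k f) {v : V} (hv : f v = ∅) {t : Finset V}
    (ht : ∀ u, G.Adj v u → (f u).Nonempty → u ∈ t) : univ ⊆ t.biUnion f := by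
  intro i _
  obtain ⟨u, hvu, hiu⟩ := hf v hv i
  exact mem_biUnion.mpr ⟨u, ht u hvu ⟨i, hiu⟩, hiu⟩

theorem rainbowDomNum_eq {V : Type*} [Fintype V] {G : SimpleGraph V} {k w : ℕ}
    {f : V → Finset (Fin k)} (hf : IsKRDF G k f) (hfw : rdfWeight f = w)
    (hmin : ∀ g : V → Finset (Fin k), IsKRDF G k g → w ≤ rdfWeight g) :
    rainbowDomNum G k = w :=
  le_antisymm (Nat.sInf_le ⟨f, hf, hfw⟩)
    (le_csInf ⟨w, f, hf, hfw⟩ fun _ ⟨g, hg, hgw⟩ => hgw ▸ hmin g hg)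

namespace MobiusLadder

variable {m : ℕ}

theorem natCast_add_self (m : ℕ) : (m : ZMod (2 * m)) + m = 0 := by
  rw [← two_mul]
  exact_mod_cast ZMod.natCast_self (2 * m)

theorem adj_iff (hm : m ≠ 0) {x y : ZMod (2 * m)} :
    (mobiusLadder m).Adj x y ↔ y = x + 1 ∨ y = x - 1 ∨ y = x + m := by
  have hmm := natCast_add_self m
  have h1 : (1 : ZMod (2 * m)) ≠ 0 := by
    rw [← Nat.cast_one, Ne, ZMod.natCast_eq_zero_iff]
    exact fun h => by have := Nat.le_of_dvd one_pos h; omega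
  have hm0 : (m : ZMod (2 * m)) ≠ 0 := by
    rw [Ne, ZMod.natCast_eq_zero_iff]
    exact fun h => by have := Nat.le_of_dvd (by omega) h; omega
  simp only [mobiusLadder, circulantGraph_adj, Set.mem_insert_iff, Set.mem_singleton_iff]
  constructor
  · rintro ⟨-, (h | h | h) | (h | h | h)⟩
    · exact .inr (.inl (by linear_combination -h))
    · exact .inl (by linear_combination -h)
    · exact .inr (.inr (by linear_combination -h - hmm))
    · exact .inl (by linear_combination h)
    · exact .inr (.inl (by linear_combination h))
    · exact .inr (.inr (by linear_combination h))
  · rintro (rfl | rfl | rfl)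
    · exact ⟨by simpa using h1, .inr (.inl (by ring))⟩
    · exact ⟨fun h => h1 (by linear_combination h), .inl (.inl (by ring))⟩
    · exact ⟨by simpa using hm0, .inr (.inr (.inr (by ring)))⟩

theorem two_le_card_add_card_of_rung_empty (hm : m ≠ 0) {f : ZMod (2 * m) → Finset (Fin 2)}
    (hf : IsKRDF (mobiusLadder m) 2 f) {x : ZMod (2 * m)} (hx : f x = ∅) (hxm : f (x + m) = ∅) :
    2 ≤ (f (x - 1)).card + (f (x + 1)).card := by
  have hcover : univ ⊆ f (x - 1) ∪ f (x + 1) := by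
    have hnbr : ∀ u, (mobiusLadder m).Adj x u → (f u).Nonempty →
        u ∈ ({x - 1, x + 1} : Finset _) := by
      intro u hxu hu
      rcases (adj_iff hm).mp hxu with rfl | rfl | rfl
      · simp
      · simp
      · simp [hxm] at hu
    simpa using hf.univ_subset_biUnion hx hnbr
  calc 2 = #(univ : Finset (Fin 2)) := rfl
    _ ≤ #(f (x - 1) ∪ f (x + 1)) := card_le_card hcover
    _ ≤ _ := card_union_le _ _

theorem le_rdfWeight [NeZero (2 * m)] {f : ZMod (2 * m) → Finset (Fin 2)}
    (hf : IsKRDF (mobiusLadder m) 2 f) : m ≤ rdfWeight f := by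
  have hm : m ≠ 0 := by have := NeZero.ne (2 * m); omega
  let s : ZMod (2 * m) → ℕ := fun x => (f x).card + (f (x + m)).card
  have rung_sum : ∀ x, s x = 0 → 4 ≤ s (x - 1) + s (x + 1) := by
    intro x hx
    obtain ⟨hfx, hfxm⟩ : f x = ∅ ∧ f (x + m) = ∅ := by simpa [s] using hx
    have h1 := two_le_card_add_card_of_rung_empty hm hf hfx hfxm
    have h2 := two_le_card_add_card_of_rung_empty hm hf hfxm
      (by rwa [add_assoc, natCast_add_self, add_zero])
    rw [← sub_add_eq_add_sub, add_right_comm] at h2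
    simp only [s]
    omega
  have total : ∑ x, s x = 2 * rdfWeight f := by
    have shift : ∑ x, (f (x + m)).card = ∑ x, (f x).card :=
      Equiv.sum_comp (Equiv.addRight _) fun x => (f x).card
    rw [sum_add_distrib, shift, rdfWeight]
    ring
  have := card_le_sum_of_four_le_of_eq_zero 1 s rung_sum
  rw [ZMod.card] at this
  omega

/-- For even `m` the colours of the even vertices alternate along the rim `0, 1, …, 2m - 1`;
for odd `m` they switch once, at `m`, and the twisted rungs supply the missing colour. -/
def optimalRDF (m : ℕ) (x : ZMod (2 * m)) : Finset (Fin 2) :=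
  if x.val % 2 = 1 then ∅
  else if (m % 2 = 0 ∧ x.val % 4 = 2) ∨ (m % 2 = 1 ∧ m ≤ x.val) then {1} else {0}

theorem zero_mem_optimalRDF {x : ZMod (2 * m)} :
    0 ∈ optimalRDF m x ↔
      x.val % 2 = 0 ∧ ¬((m % 2 = 0 ∧ x.val % 4 = 2) ∨ (m % 2 = 1 ∧ m ≤ x.val)) := by
  unfold optimalRDF
  split_ifs <;> simp_all

theorem one_mem_optimalRDF {x : ZMod (2 * m)} :
    1 ∈ optimalRDF m x ↔
      x.val % 2 = 0 ∧ ((m % 2 = 0 ∧ x.val % 4 = 2) ∨ (m % 2 = 1 ∧ m ≤ x.val)) := by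
  unfold optimalRDF
  split_ifs <;> simp_all

theorem card_optimalRDF (x : ZMod (2 * m)) : (optimalRDF m x).card = 1 - x.val % 2 := by
  unfold optimalRDF
  split_ifs <;> simp <;> omega

theorem isKRDF_optimalRDF (hm : 2 ≤ m) : IsKRDF (mobiusLadder m) 2 (optimalRDF m) := by
  have : NeZero (2 * m) := ⟨by omega⟩
  intro v hv
  suffices ∃ u ∈ ({v + 1, v - 1, v + m} : Set _), ∃ w ∈ ({v + 1, v - 1, v + m} : Set _),
      0 ∈ optimalRDF m u ∧ 1 ∈ optimalRDF m w by
    obtain ⟨u, hu, w, hw, h0, h1⟩ := this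
    intro i
    fin_cases i
    exacts [⟨u, (adj_iff (by omega)).mpr hu, h0⟩, ⟨w, (adj_iff (by omega)).mpr hw, h1⟩]
  have hodd : v.val % 2 = 1 := by
    have := card_optimalRDF v
    rw [hv, card_empty] at this
    omega
  have hval_one : (1 : ZMod (2 * m)).val = 1 := ZMod.val_one'' (by omega)
  have hval_m : (m : ZMod (2 * m)).val = m := ZMod.val_cast_of_lt (by omega)
  have h1 := ZMod.val_add_eq_or v 1
  have h2 := ZMod.val_add_eq_or (v - 1) 1
  have h3 := ZMod.val_add_eq_or v m
  rw [sub_add_cancel] at h2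
  have := v.val_lt
  have := (v + 1).val_lt
  have := (v - 1).val_lt
  have := (v + m).val_lt
  simp only [zero_mem_optimalRDF, one_mem_optimalRDF]
  obtain hpar | hpar := Nat.mod_two_eq_zero_or_one m
  · by_cases hv4 : v.val % 4 = 1
    · exact ⟨v - 1, by simp, v + 1, by simp, by omega, by omega⟩
    · exact ⟨v + 1, by simp, v - 1, by simp, by omega, by omega⟩
  · by_cases hlow : v.val < m
    · exact ⟨v - 1, by simp, v + m, by simp, by omega, by omega⟩
    by_cases hlast : v.val = 2 * m - 1
    · exact ⟨v + 1, by simp, v - 1, by simp, by omega, by omega⟩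
    · exact ⟨v + m, by simp, v + 1, by simp, by omega, by omega⟩

theorem rdfWeight_optimalRDF [NeZero (2 * m)] : rdfWeight (optimalRDF m) = m := by
  have hpair : ∀ x : ZMod (2 * m), (optimalRDF m x).card + (optimalRDF m (x + 1)).card = 1 := by
    intro x
    have hval_one : (1 : ZMod (2 * m)).val = 1 := ZMod.val_one'' (by omega)
    have := ZMod.val_add_eq_or x 1
    have := x.val_lt
    have := (x + 1).val_lt
    rw [card_optimalRDF, card_optimalRDF]
    omega
  have := two_mul_sum_eq_of_add_eq 1 _ hpair
  rw [ZMod.card] at this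
  rw [rdfWeight]
  omega

end MobiusLadder

/-- For `m ≥ 2`, the Möbius ladder `Ml(m)` satisfies `γ_r2(Ml(m)) = m`. -/
theorem stmt_18 (m : ℕ) (hm : 2 ≤ m) :
    haveI : NeZero (2 * m) := ⟨by omega⟩
    rainbowDomNum (mobiusLadder m) 2 = m := by
  have : NeZero (2 * m) := ⟨by omega⟩
  exact rainbowDomNum_eq (MobiusLadder.isKRDF_optimalRDF hm) MobiusLadder.rdfWeight_optimalRDF
    fun _ hg => MobiusLadder.le_rdfWeight hg
end
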